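/- Let p > 1, q = p/(p−1), c_p = (p−1)/(2p−1). Let R > 0, let P : [0,R] → (0,∞) be non-increasing and absolutely continuous, let f : [0,R] → [0,∞) be continuous, non-increasing, not identically 0, and set μ_f(t) = ∫_t^R f(s)P(s) ds. Then ∫_0^R μ_f(t)^q / P(t)^{1/(p−1)} dt ≥ c_p · μ_f(0)^{q+1} / (f(0) · P(0)^q). -/

import Mathlib

/-!
Since `f P` is non-increasing, `μ_f` has slope at least `-A` with `A = f(0) P(0)`, so
`μ_f(t) ≥ μ_f(0) - A t`; also `P(t) ≤ P(0)`. Hence on `[0, T]`, `T = μ_f(0) / A ≤ R`, the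
integrand dominates `(μ_f(0) - A t)^q / P(0)^{1/(p-1)}`, whose integral is
`μ_f(0)^{q+1} / (A (q+1) P(0)^{1/(p-1)})`; this is exactly the right-hand side because
`c_p = 1/(q+1)` and `q = 1 + 1/(p-1)`.
-/

open Set MeasureTheory intervalIntegral

theorem integral_rpow_sub_mul {m A q : ℝ} (hA : A ≠ 0) (hq : -1 < q) :
    ∫ t in (0 : ℝ)..m / A, (m - A * t) ^ q = m ^ (q + 1) / (A * (q + 1)) := by
  have hq1 : q + 1 ≠ 0 := by linarith
  rw [integral_comp_sub_mul (fun x => x ^ q) hA, integral_rpow (Or.inl hq),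
    mul_div_cancel₀ m hA, sub_self, mul_zero, sub_zero, Real.zero_rpow hq1, sub_zero,
    smul_eq_mul, div_mul_eq_div_div, inv_mul_eq_div, div_div, div_div, mul_comm A]

section Antitone

variable {g : ℝ → ℝ} {a b t : ℝ}

theorem AntitoneOn.integral_le_mul_sub (hg : AntitoneOn g (Icc a b)) (ht : t ∈ Icc a b) :
    ∫ s in a..t, g s ≤ g a * (t - a) := by
  have ha : a ∈ Icc a b := ⟨le_rfl, ht.1.trans ht.2⟩
  calc ∫ s in a..t, g s ≤ ∫ _ in a..t, g a :=
        integral_mono_on ht.1 ((hg.mono (uIcc_subset_Icc ha ht)).intervalIntegrable)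
          intervalIntegrable_const fun s hs => hg ha ⟨hs.1, hs.2.trans ht.2⟩ hs.1
    _ = g a * (t - a) := by rw [intervalIntegral.integral_const, smul_eq_mul, mul_comm]

theorem AntitoneOn.integral_sub_mul_le_integral (hg : AntitoneOn g (Icc a b))
    (ht : t ∈ Icc a b) : (∫ s in a..b, g s) - g a * (t - a) ≤ ∫ s in t..b, g s := by
  have ha : a ∈ Icc a b := ⟨le_rfl, ht.1.trans ht.2⟩
  have hb : b ∈ Icc a b := ⟨ht.1.trans ht.2, le_rfl⟩
  rw [← integral_add_adjacent_intervals
    ((hg.mono (uIcc_subset_Icc ha ht)).intervalIntegrable)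
    ((hg.mono (uIcc_subset_Icc ht hb)).intervalIntegrable)]
  linarith [hg.integral_le_mul_sub ht]

theorem AntitoneOn.continuousOn_integral_left (hg : AntitoneOn g (Icc a b)) (hab : a ≤ b) :
    ContinuousOn (fun t => ∫ s in t..b, g s) (Icc a b) := by
  rw [← uIcc_of_le hab] at hg ⊢
  exact continuousOn_primitive_interval_left (hg.integrableOn_isCompact isCompact_uIcc)

end Antitone

theorem le_integral_rpow_div_rpow {μ P : ℝ → ℝ} {q r A R : ℝ} (hR : 0 ≤ R) (hq : 0 ≤ q)
    (hr : 0 ≤ r) (hA : 0 < A) (hPpos : ∀ t ∈ Icc 0 R, 0 < P t) (hPanti : AntitoneOn P (Icc 0 R))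
    (hμnonneg : ∀ t ∈ Icc 0 R, 0 ≤ μ t) (hμslope : ∀ t ∈ Icc 0 R, μ 0 - A * t ≤ μ t)
    (hμR : μ 0 ≤ A * R) (hint : IntervalIntegrable (fun t => μ t ^ q / P t ^ r) volume 0 R) :
    μ 0 ^ (q + 1) / (A * (q + 1) * P 0 ^ r) ≤ ∫ t in (0 : ℝ)..R, μ t ^ q / P t ^ r := by
  set T := μ 0 / A
  have h0 : (0 : ℝ) ∈ Icc 0 R := ⟨le_rfl, hR⟩
  have hT0 : 0 ≤ T := div_nonneg (hμnonneg 0 h0) hA.le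
  have hTR : T ≤ R := (div_le_iff₀' hA).2 hμR
  have hcomparison : ∀ t ∈ Icc 0 T, (μ 0 - A * t) ^ q / P 0 ^ r ≤ μ t ^ q / P t ^ r := by
    intro t ht
    have ht' : t ∈ Icc 0 R := ⟨ht.1, ht.2.trans hTR⟩
    have hAt : 0 ≤ μ 0 - A * t := by linarith [(le_div_iff₀' hA).1 ht.2]
    exact div_le_div₀ (Real.rpow_nonneg (hμnonneg t ht') q)
      (Real.rpow_le_rpow hAt (hμslope t ht') hq) (Real.rpow_pos_of_pos (hPpos t ht') r)
      (Real.rpow_le_rpow (hPpos t ht').le (hPanti h0 ht' ht'.1) hr)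
  calc μ 0 ^ (q + 1) / (A * (q + 1) * P 0 ^ r)
      = ∫ t in (0 : ℝ)..T, (μ 0 - A * t) ^ q / P 0 ^ r := by
        rw [intervalIntegral.integral_div, integral_rpow_sub_mul hA.ne' (by linarith), div_div]
    _ ≤ ∫ t in (0 : ℝ)..T, μ t ^ q / P t ^ r := by
        refine integral_mono_on hT0 ?_ (hint.mono_set ?_) hcomparison
        · exact (((continuous_const.sub (continuous_const.mul continuous_id)).continuousOn.rpow_const
            fun _ _ => Or.inr hq).div_const _).intervalIntegrable
        · exact uIcc_subset_uIcc left_mem_uIcc (mem_uIcc_of_le hT0 hTR)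
    _ ≤ ∫ t in (0 : ℝ)..R, μ t ^ q / P t ^ r := by
        refine integral_mono_interval le_rfl hT0 hTR ?_ hint
        filter_upwards [ae_restrict_mem measurableSet_Ioc] with t ht
        exact div_nonneg (Real.rpow_nonneg (hμnonneg t (Ioc_subset_Icc_self ht)) q)
          (Real.rpow_nonneg (hPpos t (Ioc_subset_Icc_self ht)).le r)

theorem intervalIntegrable_rpow_div_rpow {μ P : ℝ → ℝ} {q r R : ℝ} (hR : 0 ≤ R) (hq : 0 ≤ q)
    (hr : 0 ≤ r) (hμ : ContinuousOn μ (Icc 0 R)) (hPpos : ∀ t ∈ Icc 0 R, 0 < P t)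
    (hPanti : AntitoneOn P (Icc 0 R)) :
    IntervalIntegrable (fun t => μ t ^ q / P t ^ r) volume 0 R := by
  rw [← uIcc_of_le hR] at hμ hPanti
  have hinv : MonotoneOn (fun t => (P t ^ r)⁻¹) (uIcc 0 R) := fun a ha b hb hab =>
    inv_anti₀ (Real.rpow_pos_of_pos (hPpos b (uIcc_of_le hR ▸ hb)) r)
      (Real.rpow_le_rpow (hPpos b (uIcc_of_le hR ▸ hb)).le (hPanti ha hb hab) hr)
  simpa only [div_eq_mul_inv] using
    hinv.intervalIntegrable.continuousOn_mul (hμ.rpow_const fun _ _ => Or.inr hq)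

theorem stmt9_general (p : ℝ) (hp : 1 < p) (q cp : ℝ) (hq : q = p / (p - 1))
    (hcp : cp = (p - 1) / (2 * p - 1))
    (R : ℝ) (hR : 0 < R) (P f : ℝ → ℝ)
    (hPpos : ∀ t ∈ Set.Icc 0 R, 0 < P t) (hPmono : AntitoneOn P (Set.Icc 0 R))
    (hfmono : AntitoneOn f (Set.Icc 0 R))
    (hfnonneg : ∀ t ∈ Set.Icc 0 R, 0 ≤ f t)
    (hfne : ∃ t ∈ Set.Icc (0 : ℝ) R, f t ≠ 0)
    (μf : ℝ → ℝ) (hμf : ∀ t, μf t = ∫ s in t..R, f s * P s) :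
    cp * (μf 0) ^ (q + 1) / (f 0 * (P 0) ^ q) ≤
      ∫ t in (0 : ℝ)..R, (μf t) ^ q / (P t) ^ (1 / (p - 1)) := by
  have hp1 : 0 < p - 1 := by linarith
  have hqr : q = 1 + 1 / (p - 1) := by rw [hq]; field_simp; ring
  have hcpq : cp = 1 / (q + 1) := by
    have : q + 1 = (2 * p - 1) / (p - 1) := by rw [hqr]; field_simp; ring
    rw [hcp, this, one_div_div]
  have h0 : (0 : ℝ) ∈ Icc 0 R := ⟨le_rfl, hR.le⟩
  obtain ⟨t₀, ht₀, hft₀⟩ := hfne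
  have hf0 : 0 < f 0 := ((hfnonneg t₀ ht₀).lt_of_ne' hft₀).trans_le (hfmono h0 ht₀ ht₀.1)
  have hfP : AntitoneOn (fun t => f t * P t) (Icc 0 R) := fun a ha b hb hab =>
    mul_le_mul (hfmono ha hb hab) (hPmono ha hb hab) (hPpos b hb).le (hfnonneg a ha)
  have hμnonneg : ∀ t ∈ Icc 0 R, 0 ≤ μf t := fun t ht => by
    rw [hμf]
    exact integral_nonneg ht.2 fun s hs =>
      mul_nonneg (hfnonneg s ⟨ht.1.trans hs.1, hs.2⟩) (hPpos s ⟨ht.1.trans hs.1, hs.2⟩).le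
  have hμslope : ∀ t ∈ Icc 0 R, μf 0 - f 0 * P 0 * t ≤ μf t := fun t ht => by
    simpa only [hμf, sub_zero] using hfP.integral_sub_mul_le_integral ht
  have hμR : μf 0 ≤ f 0 * P 0 * R := by
    simpa [hμf] using hμslope R ⟨hR.le, le_rfl⟩
  have hμcont : ContinuousOn μf (Icc 0 R) :=
    (hfP.continuousOn_integral_left hR.le).congr fun t _ => hμf t
  have hr : 0 ≤ 1 / (p - 1) := by positivity
  have hq0 : 0 ≤ q := by rw [hqr]; positivity
  have key := le_integral_rpow_div_rpow hR.le hq0 hr (mul_pos hf0 (hPpos 0 h0)) hPpos hPmono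
    hμnonneg hμslope hμR (intervalIntegrable_rpow_div_rpow hR.le hq0 hr hμcont hPpos hPmono)
  convert key using 1
  have hP0q : P 0 ^ q = P 0 * P 0 ^ (1 / (p - 1)) := by
    rw [hqr, Real.rpow_add (hPpos 0 h0), Real.rpow_one]
  rw [hcpq, hP0q, one_div_mul_eq_div, div_div]
  ring

theorem stmt9 (p : ℝ) (hp : 1 < p) (q cp : ℝ) (hq : q = p / (p - 1))
    (hcp : cp = (p - 1) / (2 * p - 1))
    (R : ℝ) (hR : 0 < R) (P f : ℝ → ℝ)
    (hPpos : ∀ t ∈ Set.Icc 0 R, 0 < P t) (hPmono : AntitoneOn P (Set.Icc 0 R))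
    (hPac : ∀ t ∈ Set.Icc (0 : ℝ) R, P t = P 0 + ∫ s in (0 : ℝ)..t, deriv P s)
    (hfcont : ContinuousOn f (Set.Icc 0 R)) (hfmono : AntitoneOn f (Set.Icc 0 R))
    (hfnonneg : ∀ t ∈ Set.Icc 0 R, 0 ≤ f t)
    (hfne : ∃ t ∈ Set.Icc (0 : ℝ) R, f t ≠ 0)
    (μf : ℝ → ℝ) (hμf : ∀ t, μf t = ∫ s in t..R, f s * P s) :
    cp * (μf 0) ^ (q + 1) / (f 0 * (P 0) ^ q) ≤
      ∫ t in (0 : ℝ)..R, (μf t) ^ q / (P t) ^ (1 / (p - 1)) :=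
  stmt9_general p hp q cp hq hcp R hR P f hPpos hPmono hfmono hfnonneg hfne μf hμf
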